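/- arXiv:1409.6774 — 8 statements merged into one kernel-verified Lean document; each statement's English description precedes it below -/
import Mathlib

section
/- Let A = ⋃_{r≥1} {i·2^{2^r} : 1 ≤ i ≤ r} ⊆ ℕ. Then: (i) for every r ∈ ℕ, A contains the set FS(x_1,…,x_r) with x_1 = ⋯ = x_r = 2^{2^r}, so A contains an IP_r set for every r (hence ℕ \ A is not IP*_r for any r); and (ii) for every sequence (x_n)_{n≥1} of positive integers, FS(x_1,x_2,…) is not contained in A, i.e., A contains no IP set (hence ℕ \ A meets every IP set of positive integers, so it is IP*). -/
open Set

/-- Finite sums set `FS(x₁,…,x_r)`. -/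
def FSfin {G : Type*} [AddCommMonoid G] {r : ℕ} (x : Fin r → G) : Set G :=
  {g | ∃ α : Finset (Fin r), α.Nonempty ∧ ∑ i ∈ α, x i = g}

/-- `A` is an IP_r set: it contains `FS(x₁,…,x_r)` for some `x₁,…,x_r`. -/
def IsIPr {G : Type*} [AddCommMonoid G] (r : ℕ) (A : Set G) : Prop :=
  ∃ x : Fin r → G, FSfin x ⊆ A

/-- `A` is an IP*_r set: it meets every IP_r set. -/
def IsIPrStar {G : Type*} [AddCommMonoid G] (r : ℕ) (A : Set G) : Prop :=
  ∀ B : Set G, IsIPr r B → (A ∩ B).Nonempty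

/-- Infinite finite-sums set `FS(x₁,x₂,…)`. -/
def FSinf {G : Type*} [AddCommMonoid G] (x : ℕ → G) : Set G :=
  {g | ∃ α : Finset ℕ, α.Nonempty ∧ ∑ n ∈ α, x n = g}

/-!
Each block `{i·2^{2^r} : 1 ≤ i ≤ r}` lies below `2^{2^{r+1}}`, and every element of a later
block is divisible by `2^{2^{r+1}}`. If `FS(x₁,x₂,…) ⊆ A`, let `x₁` lie in block `r`; a sum `y`
of further terms can be made larger than block `r`, and then `y` and `x₁ + y` both lie in later
blocks, so `2^{2^{r+1}}` divides their difference `x₁`, which is positive and too small.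
-/

theorem not_isIPrStar_compl_of_isIPr {G : Type*} [AddCommMonoid G] {r : ℕ} {A : Set G}
    (h : IsIPr r A) : ¬ IsIPrStar r (univ \ A) := fun hstar =>
  let ⟨_, ⟨_, hmA⟩, hmB⟩ := hstar A h
  hmA hmB

theorem exists_sum_gt_of_pos (x : ℕ → ℕ) (hx : ∀ n, 0 < x n) (N : ℕ) :
    ∃ α : Finset ℕ, α.Nonempty ∧ 0 ∉ α ∧ N < ∑ n ∈ α, x n := by
  refine ⟨Finset.Icc 1 (N + 1), ⟨1, by simp⟩, by simp, ?_⟩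
  calc N < (Finset.Icc 1 (N + 1)).card := by simp
    _ = ∑ _ ∈ Finset.Icc 1 (N + 1), 1 := by simp
    _ ≤ ∑ n ∈ Finset.Icc 1 (N + 1), x n := Finset.sum_le_sum fun n _ => hx n

theorem monotone_mul_two_pow_two_pow : Monotone fun r : ℕ => r * 2 ^ 2 ^ r := fun _ _ h =>
  Nat.mul_le_mul h (Nat.pow_le_pow_right two_pos (Nat.pow_le_pow_right two_pos h))

theorem mul_two_pow_two_pow_lt {i r : ℕ} (hir : i ≤ r) : i * 2 ^ 2 ^ r < 2 ^ 2 ^ (r + 1) := by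
  have hi : i < 2 ^ 2 ^ r :=
    calc i ≤ r := hir
      _ < 2 ^ r := Nat.lt_two_pow_self
      _ ≤ 2 ^ 2 ^ r := Nat.pow_le_pow_right two_pos Nat.lt_two_pow_self.le
  calc i * 2 ^ 2 ^ r < 2 ^ 2 ^ r * 2 ^ 2 ^ r := Nat.mul_lt_mul_of_pos_right hi (by positivity)
    _ = 2 ^ 2 ^ (r + 1) := by rw [← pow_add, ← two_mul, pow_succ']

def doubleExpMultiples : Set ℕ :=
  {m : ℕ | ∃ r i : ℕ, 1 ≤ r ∧ 1 ≤ i ∧ i ≤ r ∧ m = i * 2 ^ (2 ^ r)}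

namespace doubleExpMultiples

theorem pow_dvd_of_lt {m r : ℕ} (hm : m ∈ doubleExpMultiples) (hlt : r * 2 ^ 2 ^ r < m) :
    2 ^ 2 ^ (r + 1) ∣ m := by
  obtain ⟨s, i, -, -, his, rfl⟩ := hm
  have hrs : r < s := by
    by_contra! hsr
    exact hlt.not_ge ((Nat.mul_le_mul_right _ his).trans (monotone_mul_two_pow_two_pow hsr))
  exact Dvd.dvd.mul_left (pow_dvd_pow 2 (Nat.pow_le_pow_right two_pos hrs)) i

theorem fsfin_const_subset (r : ℕ) :
    FSfin (fun _ : Fin r => 2 ^ 2 ^ r) ⊆ doubleExpMultiples := by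
  rintro m ⟨α, hα, rfl⟩
  obtain ⟨i₀, -⟩ := id hα
  refine ⟨r, α.card, i₀.pos, Finset.card_pos.mpr hα, ?_, by simp⟩
  simpa using Finset.card_le_univ α

theorem not_fsinf_subset (x : ℕ → ℕ) (hx : ∀ n, 0 < x n) :
    ¬ FSinf x ⊆ doubleExpMultiples := by
  intro h
  obtain ⟨r, i, -, -, hir, hx₀⟩ : x 0 ∈ doubleExpMultiples :=
    h ⟨{0}, Finset.singleton_nonempty 0, Finset.sum_singleton x 0⟩
  obtain ⟨α, hα, h0α, hlt⟩ := exists_sum_gt_of_pos x hx (r * 2 ^ 2 ^ r)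
  have hy : 2 ^ 2 ^ (r + 1) ∣ ∑ n ∈ α, x n := pow_dvd_of_lt (h ⟨α, hα, rfl⟩) hlt
  have hxy : 2 ^ 2 ^ (r + 1) ∣ x 0 + ∑ n ∈ α, x n :=
    pow_dvd_of_lt (h ⟨insert 0 α, Finset.insert_nonempty _ _, Finset.sum_insert h0α⟩)
      (hlt.trans_le (Nat.le_add_left _ _))
  have hx₀_dvd : 2 ^ 2 ^ (r + 1) ∣ x 0 := (Nat.dvd_add_left hy).mp hxy
  exact (Nat.le_of_dvd (hx 0) hx₀_dvd).not_gt (hx₀ ▸ mul_two_pow_two_pow_lt hir)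

end doubleExpMultiples

/-- For `A = ⋃_{r ≥ 1} {i·2^{2^r} : 1 ≤ i ≤ r}`:
(i) `A` contains `FS(x₁,…,x_r)` with all `xᵢ = 2^{2^r}` for every `r` (so `ℕ \ A` is not
IP*_r for any `r ≥ 1`), while (ii) `A` contains no infinite IP set of positive integers
(so `ℕ \ A` meets every IP set of positive integers, i.e. it is IP*). -/
theorem example_ipstar_not_iprstar :
    (∀ r : ℕ, FSfin (fun _ : Fin r => 2 ^ (2 ^ r)) ⊆
      {m : ℕ | ∃ r i : ℕ, 1 ≤ r ∧ 1 ≤ i ∧ i ≤ r ∧ m = i * 2 ^ (2 ^ r)}) ∧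
    (∀ r : ℕ, 1 ≤ r → ¬ IsIPrStar r
      (Set.univ \ {m : ℕ | ∃ r i : ℕ, 1 ≤ r ∧ 1 ≤ i ∧ i ≤ r ∧ m = i * 2 ^ (2 ^ r)})) ∧
    (∀ x : ℕ → ℕ, (∀ n, 0 < x n) →
      ¬ (FSinf x ⊆ {m : ℕ | ∃ r i : ℕ, 1 ≤ r ∧ 1 ≤ i ∧ i ≤ r ∧ m = i * 2 ^ (2 ^ r)})) ∧
    (∀ x : ℕ → ℕ, (∀ n, 0 < x n) →
      ((Set.univ \ {m : ℕ | ∃ r i : ℕ, 1 ≤ r ∧ 1 ≤ i ∧ i ≤ r ∧ m = i * 2 ^ (2 ^ r)}) ∩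
        FSinf x).Nonempty) :=
  ⟨doubleExpMultiples.fsfin_const_subset,
    fun r _ => not_isIPrStar_compl_of_isIPr ⟨_, doubleExpMultiples.fsfin_const_subset r⟩,
    doubleExpMultiples.not_fsinf_subset,
    fun x hx =>
      let ⟨m, hmFS, hmA⟩ := not_subset.mp (doubleExpMultiples.not_fsinf_subset x hx)
      ⟨m, ⟨trivial, hmA⟩, hmFS⟩⟩
end

section
/- For any s, k ∈ ℕ there exists r ∈ ℕ with the following property: for every abelian group G, every IP_r set A ⊆ G, and every coloring c : A → {1,…,k}, there exist x_1,…,x_s ∈ G such that FS(x_1,…,x_s) ⊆ A and c is constant on FS(x_1,…,x_s); that is, every k-coloring of an IP_r set yields a monochromatic IP_s set. -/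
/-!
A colouring of an IP_r set `FS(x₁,…,x_r)` induces a colouring of the nonempty subsets of
`{1,…,r}`, and disjoint blocks `β₁,…,β_s` whose unions all have one colour give the
monochromatic IP_s set `FS(∑_{β₁} x, …, ∑_{β_s} x)`. So it suffices to know Folkman's finite
unions theorem. It follows from Hindman's theorem, applied to the singletons in the free
commutative monoid on `ℕ`, by compactness: if every `r` had a bad colouring, their ultrafilter
limit would contradict the infinite version.
-/

open Set

open Finset Filter Function

theorem Hindman.FS.exists_finset_sum {M : Type*} [AddCommMonoid M] {a : Stream' M} {m : M}
    (h : m ∈ FS a) : ∃ S : Finset ℕ, S.Nonempty ∧ ∑ i ∈ S, a.get i = m := by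
  induction h with
  | head' a => exact ⟨{0}, singleton_nonempty 0, sum_singleton _ _⟩
  | tail' a m _ ih =>
    obtain ⟨S, hS, rfl⟩ := ih
    exact ⟨S.map (addRightEmbedding 1), hS.map, by simp [Stream'.get_tail]⟩
  | cons' a m _ ih =>
    obtain ⟨S, hS, rfl⟩ := ih
    refine ⟨insert 0 (S.map (addRightEmbedding 1)), insert_nonempty _ _, ?_⟩
    rw [sum_insert (by simp), sum_map]
    rfl

section FiniteUnions

variable {α Ω : Type*} [DecidableEq Ω]

def IsMonochromaticUnions {ι : Type*} (κ : Finset Ω → α) (β : ι → Finset Ω) : Prop :=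
  (∀ i, (β i).Nonempty) ∧ Pairwise (Disjoint on β) ∧
    ∃ a, ∀ I : Finset ι, I.Nonempty → κ (I.biUnion β) = a

theorem IsMonochromaticUnions.comp {ι ι' : Type*} {κ : Finset Ω → α} {β : ι → Finset Ω}
    (h : IsMonochromaticUnions κ β) {e : ι' → ι} (he : Injective e) :
    IsMonochromaticUnions κ (β ∘ e) := by
  classical
  obtain ⟨hne, hdisj, a, ha⟩ := h
  refine ⟨fun i => hne (e i), hdisj.comp_of_injective he, a, fun I hI => ?_⟩
  rw [← ha (I.image e) (hI.image e), image_biUnion]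
  rfl

theorem Multiset.toFinset_finset_sum {ι : Type*} (I : Finset ι) (m : ι → Multiset Ω) :
    (∑ i ∈ I, m i).toFinset = I.biUnion fun i => (m i).toFinset := by
  ext; simp [Multiset.mem_sum]

theorem exists_isMonochromaticUnions [Finite α] (κ : Finset ℕ → α) :
    ∃ β : ℕ → Finset ℕ, IsMonochromaticUnions κ β := by
  -- Hindman's theorem for the singletons in `(Multiset ℕ, +)`: their finite sums are the nonempty
  -- finsets, and the sum of two of them is again duplicate-free only if they are disjoint.
  let a : Stream' (Multiset ℕ) := fun n => {n}
  have hFS : ∀ m ∈ Hindman.FS a, m.Nodup ∧ m ≠ 0 := by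
    intro m hm
    obtain ⟨S, hS, rfl⟩ := Hindman.FS.exists_finset_sum hm
    rw [show ∑ i ∈ S, a.get i = S.val from Multiset.sum_map_singleton S.val]
    exact ⟨S.nodup, by simpa [Finset.val_eq_zero] using hS.ne_empty⟩
  let C : α → Set (Multiset ℕ) := fun j => {m | m.Nodup ∧ m ≠ 0 ∧ κ m.toFinset = j}
  obtain ⟨_, ⟨j, rfl⟩, b, hb⟩ := Hindman.FS_partition_regular a (range C) (finite_range C)
    fun m hm => ⟨C _, ⟨_, rfl⟩, (hFS m hm).1, (hFS m hm).2, rfl⟩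
  refine ⟨fun i => (b.get i).toFinset, fun i => ?_, ?_, j, fun I hI => ?_⟩
  · simpa using (hb (Hindman.FS.singleton b i)).2.1
  · refine (pairwise_disjoint_on _).2 fun i i' hii' => Multiset.disjoint_toFinset.2 ?_
    exact (Multiset.nodup_add.1 (hb (Hindman.FS.add_two b i i' hii')).1).2.2
  · simpa [Multiset.toFinset_finset_sum] using (hb (Hindman.FS.finsetSum b I hI)).2.2

end FiniteUnions

theorem exists_isMonochromaticUnions_subset_range (s : ℕ) (α : Type*) [Finite α] :
    ∃ r, ∀ κ : Finset ℕ → α, ∃ β : Fin s → Finset ℕ,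
      IsMonochromaticUnions κ β ∧ ∀ i, β i ⊆ range r := by
  by_contra! hbad
  choose κ hκ using hbad
  -- the colouring that the bad colourings `κ r` converge to along a free ultrafilter
  choose κ' hκ' using fun S =>
    (hyperfilter ℕ).eventually_exists_iff (P := fun a r => κ r S = a)
      |>.1 (.of_forall fun r => ⟨κ r S, rfl⟩)
  obtain ⟨β, hβ⟩ := exists_isMonochromaticUnions κ'
  obtain ⟨hne, hdisj, j, hj⟩ := hβ.comp (Fin.val_injective (n := s))
  obtain ⟨N, hN⟩ := (univ.biUnion (β ∘ Fin.val)).exists_nat_subset_range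
  have hgood : ∀ᶠ r in hyperfilter ℕ, N ≤ r ∧
      ∀ I : Finset (Fin s), κ r (I.biUnion (β ∘ Fin.val)) = κ' (I.biUnion (β ∘ Fin.val)) :=
    ((eventually_ge_atTop N).filter_mono Nat.hyperfilter_le_atTop).and
      (eventually_all.2 fun I => hκ' _)
  obtain ⟨r, hNr, hagree⟩ := hgood.exists
  obtain ⟨i, hi⟩ := hκ r (β ∘ Fin.val) ⟨hne, hdisj, j, fun I hI => (hagree I).trans (hj I hI)⟩
  exact hi <| (subset_biUnion_of_mem _ (mem_univ i)).trans <|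
    hN.trans (range_subset_range.2 hNr)

section FiniteSums

variable {G : Type*} [AddCommMonoid G]

theorem sum_extend_mem_FSfin {r : ℕ} (x : Fin r → G) {S : Finset ℕ} (hS : S.Nonempty)
    (hSr : S ⊆ range r) : ∑ t ∈ S, extend Fin.val x 0 t ∈ FSfin x := by
  refine ⟨S.preimage Fin.val Fin.val_injective.injOn, ?_, ?_⟩
  · obtain ⟨t, ht⟩ := hS
    exact ⟨⟨t, mem_range.1 (hSr ht)⟩, mem_preimage.2 ht⟩
  · rw [← sum_preimage Fin.val S Fin.val_injective.injOn]
    · exact sum_congr rfl fun i _ => (Fin.val_injective.extend_apply _ _ _).symm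
    · intro t _ ht
      exact extend_apply' _ _ _ fun ⟨i, hi⟩ => ht ⟨i, hi⟩

theorem exists_biUnion_of_mem_FSfin {s : ℕ} {β : Fin s → Finset ℕ}
    (hβ : Pairwise (Disjoint on β)) (f : ℕ → G) {g : G} (hg : g ∈ FSfin fun i => ∑ t ∈ β i, f t) :
    ∃ I : Finset (Fin s), I.Nonempty ∧ ∑ t ∈ I.biUnion β, f t = g := by
  obtain ⟨I, hI, rfl⟩ := hg
  exact ⟨I, hI, sum_biUnion fun i _ i' _ hii' => hβ hii'⟩

end FiniteSums

/-- For any `s, k` there is `r` such that any `k`-coloring of any IP_r set in any abelian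
group yields a monochromatic IP_s set. -/
theorem ipr_partition_regular (s k : ℕ) :
    ∃ r : ℕ, ∀ (G : Type*) [AddCommGroup G] (A : Set G) (c : A → Fin k),
      IsIPr r A →
        ∃ (x : Fin s → G) (hsub : FSfin x ⊆ A) (j : Fin k),
          ∀ g : G, ∀ hg : g ∈ FSfin x, c ⟨g, hsub hg⟩ = j := by
  classical
  obtain ⟨r, hr⟩ := exists_isMonochromaticUnions_subset_range s (Fin k)
  refine ⟨r + 1, fun G _ A c ⟨x, hx⟩ => ?_⟩
  let f := extend Fin.val x 0
  have hx₀ : x 0 ∈ A := hx ⟨{0}, singleton_nonempty _, sum_singleton _ _⟩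
  -- sets whose sum leaves `A` get a dummy colour; using `r + 1` makes `A` nonempty
  let κ : Finset ℕ → Fin k := fun S =>
    if h : ∑ t ∈ S, f t ∈ A then c ⟨_, h⟩ else c ⟨x 0, hx₀⟩
  obtain ⟨β, ⟨hne, hdisj, j, hj⟩, hβr⟩ := hr κ
  have hunion (I : Finset (Fin s)) (hI : I.Nonempty) : ∑ t ∈ I.biUnion β, f t ∈ A :=
    hx <| sum_extend_mem_FSfin x (hI.biUnion fun i _ => hne i)
      (biUnion_subset.2 fun i _ => (hβr i).trans (range_subset_range.2 r.le_succ))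
  have hsub : FSfin (fun i => ∑ t ∈ β i, f t) ⊆ A := fun g hg => by
    obtain ⟨I, hI, rfl⟩ := exists_biUnion_of_mem_FSfin hdisj f hg
    exact hunion I hI
  refine ⟨_, hsub, j, fun g hg => ?_⟩
  obtain ⟨I, hI, rfl⟩ := exists_biUnion_of_mem_FSfin hdisj f hg
  rw [← hj I hI]
  simp only [κ, dif_pos (hunion I hI)]
end

section
/- For any s, k ∈ ℕ there exists r ∈ ℕ with the following property: for every coloring c of the collection 𝔉_r of nonempty subsets of {1,…,r} with k colors, there exist nonempty sets α_1, …, α_s ⊆ {1,…,r} with max α_i < min α_{i+1} for 1 ≤ i < s such that c is constant on the collection of all unions ⋃_{i∈β} α_i over nonempty β ⊆ {1,…,s}. -/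
/-!
Finite sets of naturals form a semigroup under "ordered union": `α * β = α ∪ β` when every element
of `α` is below every element of `β`, and an absorbing `undefined` otherwise. In it the finite
products of the singletons `{1}, {2}, …` are exactly the nonempty finite subsets of `ℕ₊`, so the
strong form of Hindman's theorem, applied to a colouring of that FP-set, yields an increasing
sequence of blocks all of whose finite unions have the same colour. The finite statement follows
by compactness: counterexample colourings for every `r` have a limit along an ultrafilter, and the
infinite theorem for the limit only looks at finitely many sets.
-/

open Set Hindman

namespace FiniteUnions

def Precedes (α β : Finset ℕ) : Prop := ∀ a ∈ α, ∀ b ∈ β, a < b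

instance : DecidableRel Precedes := fun α β =>
  inferInstanceAs (Decidable (∀ a ∈ α, ∀ b ∈ β, a < b))

section Precedes

variable {α β γ : Finset ℕ}

lemma precedes_union_left : Precedes (α ∪ β) γ ↔ Precedes α γ ∧ Precedes β γ := by
  simp only [Precedes, Finset.mem_union, or_imp, forall_and]

lemma precedes_union_right : Precedes α (β ∪ γ) ↔ Precedes α β ∧ Precedes α γ := by
  simp only [Precedes, Finset.mem_union, or_imp, forall_and]

lemma precedes_biUnion_right {ι : Type*} {I : Finset ι} {β : ι → Finset ℕ} :
    Precedes α (I.biUnion β) ↔ ∀ i ∈ I, Precedes α (β i) := by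
  simp only [Precedes, Finset.mem_biUnion]
  grind

end Precedes

inductive OrderedUnion
  | of : Finset ℕ → OrderedUnion
  | undefined : OrderedUnion

namespace OrderedUnion

instance : Mul OrderedUnion where
  mul
    | of α, of β => if Precedes α β then of (α ∪ β) else undefined
    | _, _ => undefined

@[simp]
lemma of_mul_of (α β : Finset ℕ) :
    of α * of β = if Precedes α β then of (α ∪ β) else undefined := rfl

@[simp]
lemma undefined_mul (x : OrderedUnion) : undefined * x = undefined := rfl

@[simp]
lemma mul_undefined (x : OrderedUnion) : x * undefined = undefined := by
  cases x <;> rfl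

instance : Semigroup OrderedUnion where
  mul_assoc := by
    rintro (α | _) (β | _) (γ | _) <;> simp only [of_mul_of, undefined_mul, mul_undefined]
    by_cases hαβ : Precedes α β <;> by_cases hβγ : Precedes β γ <;> by_cases hαγ : Precedes α γ <;>
      simp [hαβ, hβγ, hαγ, precedes_union_left, precedes_union_right, Finset.union_assoc]

def toFinset : OrderedUnion → Finset ℕ
  | of α => α
  | undefined => ∅

def singletons (d : ℕ) : Stream' OrderedUnion := fun n => of {n + d}

lemma head_singletons (d : ℕ) : (singletons d).head = of {d} := by
  simp [singletons, Stream'.head, Stream'.get]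

lemma tail_singletons (d : ℕ) : (singletons d).tail = singletons (d + 1) := by
  funext n
  simp only [singletons, Stream'.tail, Stream'.get]
  ring_nf

lemma exists_eq_of_of_mem_FP_singletons {d : ℕ} {x : OrderedUnion} (hx : x ∈ FP (singletons d)) :
    ∃ α : Finset ℕ, x = of α ∧ α.Nonempty ∧ ∀ a ∈ α, d ≤ a := by
  generalize hs : singletons d = s at hx
  induction hx generalizing d with
  | head' s => exact ⟨{d}, by rw [← hs, head_singletons], by simp⟩
  | tail' s x _ ih =>
    obtain ⟨α, rfl, hne, hge⟩ := ih (d := d + 1) (by rw [← hs, tail_singletons])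
    exact ⟨α, rfl, hne, fun a ha => Nat.le_of_succ_le (hge a ha)⟩
  | cons' s x _ ih =>
    obtain ⟨α, rfl, hne, hge⟩ := ih (d := d + 1) (by rw [← hs, tail_singletons])
    have hprec : Precedes {d} α := by simpa [Precedes] using hge
    refine ⟨{d} ∪ α, by rw [← hs, head_singletons, of_mul_of, if_pos hprec], by simp, ?_⟩
    simp only [Finset.mem_union, Finset.mem_singleton]
    rintro a (rfl | ha)
    exacts [le_rfl, Nat.le_of_succ_le (hge a ha)]

lemma of_biUnion_mem_FP_drop {b : Stream' OrderedUnion} {β : ℕ → Finset ℕ}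
    (hbβ : ∀ i, b.get i = of (β i)) (hβ : ∀ i j, i < j → Precedes (β i) (β j))
    {I : Finset ℕ} (hI : I.Nonempty) {n : ℕ} (hn : ∀ i ∈ I, n ≤ i) :
    of (I.biUnion β) ∈ FP (b.drop n) := by
  induction I using Finset.induction_on_min generalizing n with
  | empty => simp at hI
  | insert a I haI ih =>
    refine FP_drop_subset_FP _ (a - n) ?_
    rw [Stream'.drop_drop, Nat.add_sub_cancel' (hn a (Finset.mem_insert_self a I))]
    rcases I.eq_empty_or_nonempty with rfl | hI'
    · simpa [hbβ] using FP.head (b.drop a)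
    · have hprec : Precedes (β a) (I.biUnion β) :=
        precedes_biUnion_right.mpr fun i hi => hβ a i (haI i hi)
      have hrest := ih hI' (n := a + 1) fun i hi => haI i hi
      rw [← Stream'.tail_drop'] at hrest
      have hcons := FP.cons _ _ hrest
      rw [Stream'.head_drop, hbβ] at hcons
      simpa [Finset.biUnion_insert, hprec] using hcons

end OrderedUnion

open OrderedUnion

theorem exists_increasing_blocks_monochromatic_unions {κ : Type*} [Finite κ]
    (c : Finset ℕ → κ) :
    ∃ (β : ℕ → Finset ℕ) (col : κ), (∀ i, (β i).Nonempty ∧ ∀ a ∈ β i, 1 ≤ a) ∧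
      (∀ i j, i < j → Precedes (β i) (β j)) ∧
      ∀ I : Finset ℕ, I.Nonempty → c (I.biUnion β) = col := by
  obtain ⟨_, ⟨col, rfl⟩, b, hb⟩ := FP_partition_regular (singletons 1)
    (range fun col => {x | c x.toFinset = col} ∩ FP (singletons 1)) (finite_range _)
    fun x hx => mem_sUnion.mpr ⟨_, mem_range_self (c x.toFinset), rfl, hx⟩
  choose β hbβ hβ using fun i => exists_eq_of_of_mem_FP_singletons (hb (FP.singleton b i)).2
  have hprec : ∀ i j, i < j → Precedes (β i) (β j) := by
    intro i j hij
    obtain ⟨α, hα, -⟩ := exists_eq_of_of_mem_FP_singletons (hb (FP.mul_two _ i j hij)).2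
    by_contra h
    simp [hbβ, h] at hα
  refine ⟨β, col, hβ, hprec, fun I hI => ?_⟩
  have hunion := of_biUnion_mem_FP_drop hbβ hprec hI (n := 0) fun i _ => i.zero_le
  simpa [OrderedUnion.toFinset] using (hb hunion).1

theorem exists_uniform_bound_of_local {X κ : Type*} [Finite κ] (W : ℕ → (X → κ) → Prop)
    (hW : ∀ c : X → κ, ∃ (F : Finset X) (r : ℕ),
      ∀ c' : X → κ, (∀ x ∈ F, c' x = c x) → ∀ r' ≥ r, W r' c') :
    ∃ r, ∀ c, W r c := by
  by_contra! hbad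
  choose bad hbad using hbad
  have hlim : ∀ x, ∃ col, ∀ᶠ r in Filter.hyperfilter ℕ, bad r x = col := fun x => by
    obtain ⟨col, hcol⟩ := ((Filter.hyperfilter ℕ).map (bad · x)).eq_pure_of_finite
    have : {col} ∈ (Filter.hyperfilter ℕ).map (bad · x) := hcol ▸ Ultrafilter.mem_pure.mpr rfl
    exact ⟨col, Ultrafilter.mem_map.mp this⟩
  choose c hc using hlim
  obtain ⟨F, r, hr⟩ := hW c
  have hgood : ∀ᶠ r' in Filter.hyperfilter ℕ, r ≤ r' ∧ ∀ x ∈ F, bad r' x = c x :=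
    ((Filter.eventually_ge_atTop r).filter_mono Nat.hyperfilter_le_atTop).and
      ((Filter.eventually_all_finset F).mpr fun x _ => hc x)
  obtain ⟨r', hr'r, hagree⟩ := hgood.exists
  exact hbad r' (hr _ hagree r' hr'r)

end FiniteUnions

open FiniteUnions in
/-- For any `s, k` there is `r` such that any `k`-coloring of the nonempty subsets of
`{1,…,r}` admits nonempty sets `α₁ < ⋯ < α_s ⊆ {1,…,r}` (each element of `α_i` is smaller
than each element of `α_j` for `i < j`) all of whose finite unions get the same color. -/
theorem finite_unions_partition_regular (s k : ℕ) :
    ∃ r : ℕ, ∀ c : Finset ℕ → Fin k,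
      ∃ α : Fin s → Finset ℕ,
        (∀ i, (α i).Nonempty) ∧
        (∀ i, α i ⊆ Finset.Icc 1 r) ∧
        (∀ i j : Fin s, i < j → ∀ a ∈ α i, ∀ b ∈ α j, a < b) ∧
        ∃ col : Fin k, ∀ β : Finset (Fin s), β.Nonempty → c (β.biUnion α) = col := by
  refine exists_uniform_bound_of_local _ fun c => ?_
  obtain ⟨β, col, hβ, hprec, hcol⟩ := exists_increasing_blocks_monochromatic_unions c
  set α : Fin s → Finset ℕ := fun i => β i
  refine ⟨Finset.univ.image fun I : Finset (Fin s) => I.biUnion α, (Finset.univ.biUnion α).sup id,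
    fun c' hc' r hr => ⟨α, fun i => (hβ i).1, fun i a ha => ?_, fun i j hij => hprec i j hij, col,
      fun I hI => ?_⟩⟩
  · have : a ≤ (Finset.univ.biUnion α).sup id :=
      Finset.le_sup (f := id) (Finset.mem_biUnion.mpr ⟨i, Finset.mem_univ i, ha⟩)
    exact Finset.mem_Icc.mpr ⟨(hβ i).2 a ha, this.trans hr⟩
  · rw [hc' _ (Finset.mem_image_of_mem _ (Finset.mem_univ I)), ← Finset.image_biUnion]
    exact hcol _ (hI.image _)
end

section
/- For any s ∈ ℕ there exists r ∈ ℕ such that for every abelian group G, every IP*_s set A ⊆ G, and every IP_r set B ⊆ G, the intersection A ∩ B contains an IP_s set; that is, there exist x_1,…,x_s ∈ G with FS(x_1,…,x_s) ⊆ A ∩ B. -/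
open Set

/-!
Colour each finite set `γ` of indices by whether `∑ i ∈ γ, y i` lies in `A`. By the finite
unions theorem, for `r` large enough there are pairwise disjoint nonempty `α₁, …, αₛ` all of
whose nonempty unions get the same colour. The block sums `xⱼ = ∑ i ∈ αⱼ, y i` then satisfy
`FS(x) ⊆ FS(y) ⊆ B`, and the common colour must be "in `A`" because `FS(x)` is an IP_s set and
`A` is IP*_s.

The finite unions theorem is Hindman's theorem in the monoid of finite sets of naturals under
disjoint union, where the union of two intersecting sets is an absorbing `clash`: the finite
products of the singletons `{i}` are exactly the nonempty finite sets. Rado's selection principle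
(compactness) turns the infinite statement into the finite one.
-/

open Finset Function

inductive DisjUnionMonoid (α : Type*)
  | of : Finset α → DisjUnionMonoid α
  | clash : DisjUnionMonoid α

namespace DisjUnionMonoid

variable {α : Type*}

instance : One (DisjUnionMonoid α) := ⟨of ∅⟩

lemma one_def : (1 : DisjUnionMonoid α) = of ∅ := rfl

variable [DecidableEq α]

instance : Mul (DisjUnionMonoid α) where
  mul
    | of s, of t => if Disjoint s t then of (s ∪ t) else clash
    | _, _ => clash

lemma of_mul_of (s t : Finset α) :
    of s * of t = if Disjoint s t then of (s ∪ t) else clash := rfl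

@[simp] lemma clash_mul (a : DisjUnionMonoid α) : clash * a = clash := rfl

@[simp] lemma mul_clash (a : DisjUnionMonoid α) : a * clash = clash := by cases a <;> rfl

instance : CommMonoid (DisjUnionMonoid α) where
  mul_assoc := by
    rintro (s | _) (t | _) (u | _) <;> simp only [of_mul_of, clash_mul, mul_clash]
    by_cases hst : Disjoint s t <;> by_cases htu : Disjoint t u <;> by_cases hsu : Disjoint s u <;>
      simp [of_mul_of, *, Finset.union_assoc]
  one_mul := by rintro (s | _) <;> simp [one_def, of_mul_of]
  mul_one := by rintro (s | _) <;> simp [one_def, of_mul_of]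
  mul_comm := by rintro (s | _) (t | _) <;> simp [of_mul_of, disjoint_comm, Finset.union_comm]

lemma of_mul_of_eq_of_iff {s t u : Finset α} :
    of s * of t = of u ↔ Disjoint s t ∧ s ∪ t = u := by
  rw [of_mul_of]
  split_ifs with h <;> simp [h]

lemma prod_of {ι : Type*} [DecidableEq ι] {β : Finset ι} {f : ι → Finset α}
    (hf : (β : Set ι).PairwiseDisjoint f) : ∏ i ∈ β, of (f i) = of (β.biUnion f) := by
  induction β using Finset.induction_on with
  | empty => rfl
  | insert i β hi ih =>
    rw [coe_insert] at hf
    have hdisj : Disjoint (f i) (β.biUnion f) := (disjoint_biUnion_right _ _ _).2 fun j hj =>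
      hf (Set.mem_insert _ _) (Set.mem_insert_of_mem _ hj) (ne_of_mem_of_not_mem hj hi).symm
    rw [prod_insert hi, ih (hf.subset (Set.subset_insert _ _)), Finset.biUnion_insert,
      of_mul_of_eq_of_iff.2 ⟨hdisj, rfl⟩]

lemma exists_of_mem_FP_singletons {n : ℕ} {m : DisjUnionMonoid ℕ}
    (hm : m ∈ Hindman.FP fun i => of {n + i}) :
    ∃ γ : Finset ℕ, γ.Nonempty ∧ (∀ i ∈ γ, n ≤ i) ∧ m = of γ := by
  have htail (n : ℕ) : Stream'.tail (fun i => of {n + i}) = fun i => of {n + 1 + i} := by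
    funext i
    simp [Stream'.tail, Stream'.get, add_assoc, add_comm 1]
  generalize ha : (fun i => of {n + i} : Stream' (DisjUnionMonoid ℕ)) = a at hm
  induction hm generalizing n with
  | head' a =>
    subst ha
    exact ⟨{n}, singleton_nonempty n, by simp, rfl⟩
  | tail' a m _ ih =>
    subst ha
    obtain ⟨γ, hne, hge, rfl⟩ := ih (htail n).symm
    exact ⟨γ, hne, fun i hi => (hge i hi).trans' n.le_succ, rfl⟩
  | cons' a m _ ih =>
    subst ha
    obtain ⟨γ, hne, hge, rfl⟩ := ih (htail n).symm
    have hdisj : Disjoint {n} γ :=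
      disjoint_singleton_left.2 fun hn => (hge n hn).not_gt n.lt_succ_self
    refine ⟨{n} ∪ γ, by simp, fun i hi => ?_, of_mul_of_eq_of_iff.2 ⟨hdisj, rfl⟩⟩
    rcases mem_union.1 hi with hi | hi
    · exact (mem_singleton.1 hi).ge
    · exact (hge i hi).trans' n.le_succ

end DisjUnionMonoid

open DisjUnionMonoid in
theorem exists_pairwise_disjoint_monochromatic_biUnion {κ : Type*} [Finite κ]
    (c : Finset ℕ → κ) :
    ∃ (α : ℕ → Finset ℕ) (k : κ), (∀ j, (α j).Nonempty) ∧ Pairwise (Disjoint on α) ∧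
      ∀ β : Finset ℕ, β.Nonempty → c (β.biUnion α) = k := by
  let cell (k : κ) : Set (DisjUnionMonoid ℕ) := {m | ∃ γ, γ.Nonempty ∧ m = of γ ∧ c γ = k}
  have hcover : Hindman.FP (fun i => of {i}) ⊆ ⋃₀ Set.range cell := by
    intro m hm
    obtain ⟨γ, hγ, -, rfl⟩ := exists_of_mem_FP_singletons (n := 0) (by simpa only [zero_add])
    exact Set.mem_sUnion.2 ⟨_, ⟨c γ, rfl⟩, γ, hγ, rfl, rfl⟩
  obtain ⟨_, ⟨k, rfl⟩, b, hb⟩ :=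
    Hindman.FP_partition_regular _ _ (Set.finite_range cell) hcover
  choose α hαne hbα _ using fun i => hb (Hindman.FP.singleton b i)
  have hprod (β : Finset ℕ) (hβ : β.Nonempty) : ∃ γ, ∏ i ∈ β, b.get i = of γ ∧ c γ = k := by
    obtain ⟨γ, -, hγ, hck⟩ := hb (Hindman.FP.finsetProd b β hβ)
    exact ⟨γ, hγ, hck⟩
  have hdisj : Pairwise (Disjoint on α) := by
    intro i j hij
    obtain ⟨γ, hγ, -⟩ := hprod {i, j} (insert_nonempty _ _)
    rw [prod_pair hij, hbα, hbα] at hγ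
    exact (of_mul_of_eq_of_iff.1 hγ).1
  refine ⟨α, k, hαne, hdisj, fun β hβ => ?_⟩
  obtain ⟨γ, hγ, hck⟩ := hprod β hβ
  simp_rw [hbα, prod_of (hdisj.set_pairwise _)] at hγ
  rwa [of.inj hγ]

theorem exists_fin_pairwise_disjoint_monochromatic_biUnion (κ : Type*) [Finite κ] (s : ℕ) :
    ∃ r, ∀ c : Finset (Fin r) → κ, ∃ (α : Fin s → Finset (Fin r)) (k : κ),
      (∀ j, (α j).Nonempty) ∧ Pairwise (Disjoint on α) ∧
      ∀ β : Finset (Fin s), β.Nonempty → c (β.biUnion α) = k := by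
  by_contra! hbad
  choose C hC using hbad
  -- Stitch the bad colourings `C N` into one colouring `χ` of `Finset ℕ`; the monochromatic
  -- family of `χ` is then also one for the `C N` that `χ` agrees with on the relevant unions.
  let bound (T : Finset (Finset ℕ)) : ℕ := (T.sup id).sup id + 1
  have subset_range_bound {T : Finset (Finset ℕ)} {γ} (hγ : γ ∈ T) : γ ⊆ range (bound T) :=
    (le_sup (f := id) hγ).trans (subset_range_sup_succ _)
  let restrict (N : ℕ) (γ : Finset ℕ) : Finset (Fin N) := γ.preimage Fin.val Fin.val_injective.injOn
  obtain ⟨χ, hχ⟩ := Finset.rado_selection fun T γ => C (bound T) (restrict (bound T) γ)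
  obtain ⟨α, k, hne, hdisj, hmono⟩ := exists_pairwise_disjoint_monochromatic_biUnion χ
  let lift (β : Finset (Fin s)) : Finset ℕ := (β.map Fin.valEmbedding).biUnion α
  obtain ⟨T, hST, hχT⟩ := hχ (univ.image lift)
  have hα (j : Fin s) : α j ⊆ range (bound T) := by
    simpa [lift] using subset_range_bound (hST (mem_image_of_mem lift (mem_univ {j})))
  obtain ⟨β, hβ, hβk⟩ := hC (bound T) (fun j => restrict _ (α j)) k
    (fun j => let ⟨i, hi⟩ := hne j; ⟨⟨i, mem_range.1 (hα j hi)⟩, mem_preimage.2 hi⟩)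
    (fun i j hij => disjoint_left.2 fun x hxi hxj =>
      disjoint_left.1 (hdisj (Fin.val_injective.ne hij)) (mem_preimage.1 hxi) (mem_preimage.1 hxj))
  have hrestrict : β.biUnion (fun j => restrict _ (α j)) = restrict (bound T) (lift β) := by
    ext i
    simp [restrict, lift]
  apply hβk
  rw [hrestrict, ← hχT _ (mem_image_of_mem _ (mem_univ β))]
  exact hmono _ hβ.map

theorem mem_FSfin_sum_iff {G : Type*} [AddCommMonoid G] {r s : ℕ} {y : Fin r → G}
    {α : Fin s → Finset (Fin r)} (hα : Pairwise (Disjoint on α)) {g : G} :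
    g ∈ FSfin (fun j => ∑ i ∈ α j, y i) ↔
      ∃ β : Finset (Fin s), β.Nonempty ∧ ∑ i ∈ β.biUnion α, y i = g := by
  simp only [FSfin, Set.mem_ofPred_eq, sum_biUnion (hα.set_pairwise _)]

theorem FSfin_sum_subset {G : Type*} [AddCommMonoid G] {r s : ℕ} (y : Fin r → G)
    {α : Fin s → Finset (Fin r)} (hne : ∀ j, (α j).Nonempty) (hα : Pairwise (Disjoint on α)) :
    FSfin (fun j => ∑ i ∈ α j, y i) ⊆ FSfin y := by
  intro g hg
  obtain ⟨β, hβ, rfl⟩ := (mem_FSfin_sum_iff hα).1 hg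
  exact ⟨_, hβ.biUnion fun j _ => hne j, rfl⟩

/-- For any `s` there is `r` such that, in any abelian group, any IP*_s set intersects
any IP_r set in an IP_s set. -/
theorem ipsstar_inter_ipr_contains_ips (s : ℕ) :
    ∃ r : ℕ, ∀ (G : Type*) [AddCommGroup G] (A B : Set G),
      IsIPrStar s A → IsIPr r B →
        ∃ x : Fin s → G, FSfin x ⊆ A ∩ B := by
  classical
  obtain ⟨r, hr⟩ := exists_fin_pairwise_disjoint_monochromatic_biUnion Bool s
  refine ⟨r, fun G _ A B hA ⟨y, hy⟩ => ?_⟩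
  obtain ⟨α, k, hne, hdisj, hmono⟩ := hr fun γ => decide (∑ i ∈ γ, y i ∈ A)
  have hB := (FSfin_sum_subset y hne hdisj).trans hy
  cases k with
  | false =>
    obtain ⟨g, hgA, hg⟩ := hA _ ⟨_, subset_rfl⟩
    obtain ⟨β, hβ, rfl⟩ := (mem_FSfin_sum_iff hdisj).1 hg
    exact absurd hgA (of_decide_eq_false (hmono β hβ))
  | true =>
    refine ⟨_, fun g hg => ⟨?_, hB hg⟩⟩
    obtain ⟨β, hβ, rfl⟩ := (mem_FSfin_sum_iff hdisj).1 hg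
    exact of_decide_eq_true (hmono β hβ)
end

section
/- For any r, s ∈ ℕ there exists q ∈ ℕ such that for every abelian group G, if A ⊆ G is IP*_r and B ⊆ G is IP*_s, then A ∩ B is IP*_q; that is, the intersection of an IP*_r set and an IP*_s set meets every IP_q set. -/
/-!
The heart of the matter is a finite unions theorem: for every `m` there is a finite set `I` such
that every finite colouring of the subsets of `I` admits pairwise disjoint nonempty blocks
`D₀, …, D_{m-1}` for which the colour of a union `⋃_{j ∈ β} D_j` depends only on `max β`. It
follows by induction on `m` from the Hales–Jewett theorem: take a monochromatic combinatorial line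
over the alphabet of subsets of `Option I`; a family for `m` placed on the product of the line's
variable coordinates with `I` extends to a family for `m + 1` whose new top block absorbs the fixed
coordinates of the line.

Given `FS(x_i : i ∈ I)`, colour `S ⊆ I` by whether `∑_{i ∈ S} x_i ∈ A` and take the block sums
`y_j = ∑_{i ∈ D_j} x_i` for `m = r + s`. Each sum of the `y_j` lies in `FS(x)`, and lies in `A`
iff its top block sum does. Since `A` is IP*_r, fewer than `r` blocks have `y_j ∉ A`; so at least
`s` of them have `y_j ∈ A`, and since `B` is IP*_s some sum of those lies in `B`, hence in `A ∩ B`.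
-/

open Set

open Finset

namespace Combinatorics

section TopDetermined

variable {I κ : Type*} [DecidableEq I]

structure IsTopDetermined (c : Finset I → κ) (m : ℕ) (D : ℕ → Finset I) : Prop where
  nonempty : ∀ j < m, (D j).Nonempty
  pairwiseDisjoint : (Finset.range m : Set ℕ).PairwiseDisjoint D
  color_union : ∀ j < m, ∀ β : Finset ℕ, (∀ k ∈ β, k < j) → c (D j ∪ β.biUnion D) = c (D j)

theorem IsTopDetermined.color_biUnion {c : Finset I → κ} {m : ℕ} {D : ℕ → Finset I}
    (hD : IsTopDetermined c m D) {β : Finset ℕ} (hβ : β ⊆ range m) (hne : β.Nonempty) :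
    c (β.biUnion D) = c (D (β.max' hne)) := by
  have hmax := β.max'_mem hne
  calc c (β.biUnion D) = c (D (β.max' hne) ∪ (β.erase (β.max' hne)).biUnion D) := by
        rw [← Finset.biUnion_insert, insert_erase hmax]
    _ = c (D (β.max' hne)) :=
        hD.color_union _ (mem_range.1 (hβ hmax)) _ fun _ ↦ β.lt_max'_of_mem_erase_max' hne

end TopDetermined

section Lines

variable {ι α : Type*} [Fintype ι]

def Line.varCoords (l : Line (Finset α) ι) : Finset ι := {i | l.idxFun i = none}

theorem Line.varCoords_nonempty (l : Line (Finset α) ι) : l.varCoords.Nonempty :=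
  let ⟨i, hi⟩ := l.proper
  ⟨i, by simpa [varCoords]⟩

variable [Fintype α] [DecidableEq α]

def fiberSet (w : ι → Finset α) : Finset (ι × α) := Finset.univ.filter fun z ↦ z.2 ∈ w z.1

@[simp]
theorem mem_fiberSet {w : ι → Finset α} {z : ι × α} : z ∈ fiberSet w ↔ z.2 ∈ w z.1 := by
  simp [fiberSet]

theorem disjoint_fiberSet_line (l : Line (Finset α) ι) (γ : Finset α) :
    Disjoint (fiberSet (l ∅)) (l.varCoords ×ˢ γ) := by
  rw [Finset.disjoint_left]
  rintro ⟨i, a⟩ h₁ h₂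
  simp_all [Line.varCoords]

variable [DecidableEq ι]

theorem fiberSet_line (l : Line (Finset α) ι) (γ : Finset α) :
    fiberSet (l γ) = fiberSet (l ∅) ∪ l.varCoords ×ˢ γ := by
  ext ⟨i, a⟩
  cases h : l.idxFun i <;> simp [Line.varCoords, h]

end Lines

section Extension

variable {ι I κ : Type*} [Fintype ι] [DecidableEq ι] [Fintype I] [DecidableEq I]

theorem IsTopDetermined.extend {c : Finset (ι × Option I) → κ}
    {l : Line (Finset (Option I)) ι} (hl : l.IsMono fun w ↦ c (fiberSet w)) {m : ℕ}
    {E : ℕ → Finset I} (hE : IsTopDetermined (fun T ↦ c (l.varCoords ×ˢ T.map .some)) m E) :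
    IsTopDetermined c (m + 1)
      (Function.update (fun j ↦ l.varCoords ×ˢ (E j).map .some) m (fiberSet (l {none}))) := by
  set φ : Finset I → Finset (ι × Option I) := fun T ↦ l.varCoords ×ˢ T.map .some with hφ
  set D := Function.update (fun j ↦ φ (E j)) m (fiberSet (l {none}))
  have hD_lt {j : ℕ} (hj : j < m) : D j = φ (E j) := Function.update_of_ne hj.ne _ _
  have hD_top : D m = fiberSet (l {none}) := Function.update_self _ _ _
  have hφ_union (S T : Finset I) : φ S ∪ φ T = φ (S ∪ T) := by
    simp only [hφ, ← product_union, ← map_union]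
  have hD_biUnion {β : Finset ℕ} (hβ : ∀ k ∈ β, k < m) : β.biUnion D = φ (β.biUnion E) := by
    rw [biUnion_congr rfl fun k hk ↦ hD_lt (hβ k hk)]
    ext
    simp only [hφ, Finset.mem_biUnion, Finset.mem_product, Finset.mem_map]
    tauto
  have hφ_disjoint {S T : Finset I} (h : Disjoint S T) : Disjoint (φ S) (φ T) :=
    disjoint_product.2 (.inr ((disjoint_map _).2 h))
  have htop_union (T : Finset I) :
      fiberSet (l {none}) ∪ φ T = fiberSet (l (insert none (T.map .some))) := by
    rw [fiberSet_line l {none}, fiberSet_line l (insert _ _), Finset.insert_eq, product_union,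
      Finset.union_assoc]
  have htop_disjoint (T : Finset I) : Disjoint (fiberSet (l {none})) (φ T) := by
    rw [fiberSet_line, Finset.disjoint_union_left]
    exact ⟨disjoint_fiberSet_line l _, disjoint_product.2 (.inr (by simp))⟩
  constructor
  · intro j hj
    rcases Nat.lt_succ_iff_lt_or_eq.1 hj with hj | rfl
    · rw [hD_lt hj]
      exact l.varCoords_nonempty.product (hE.nonempty j hj).map
    · rw [hD_top, fiberSet_line]
      exact (l.varCoords_nonempty.product (singleton_nonempty _)).mono subset_union_right
  · rw [Finset.range_add_one, Finset.coe_insert, Set.pairwiseDisjoint_insert]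
    refine ⟨fun j hj k hk hjk ↦ ?_, fun j hj _ ↦ ?_⟩
    · simp only [Function.onFun, hD_lt (Finset.mem_range.1 hj), hD_lt (Finset.mem_range.1 hk)]
      exact hφ_disjoint (hE.pairwiseDisjoint hj hk hjk)
    · rw [hD_top, hD_lt (Finset.mem_range.1 hj)]
      exact htop_disjoint _
  · intro j hj β hβ
    rcases Nat.lt_succ_iff_lt_or_eq.1 hj with hj | rfl
    · rw [hD_lt hj, hD_biUnion fun k hk ↦ (hβ k hk).trans hj, hφ_union]
      exact hE.color_union j hj β hβ
    · obtain ⟨b, hb⟩ := hl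
      rw [hD_top, hD_biUnion hβ, htop_union]
      exact (hb _).trans (hb _).symm

end Extension

theorem exists_isTopDetermined (κ : Type*) [Finite κ] (m : ℕ) :
    ∃ (I : Type) (_ : Fintype I) (_ : DecidableEq I),
      ∀ c : Finset I → κ, ∃ D : ℕ → Finset I, IsTopDetermined c m D := by
  induction m with
  | zero =>
    refine ⟨Empty, inferInstance, inferInstance, fun c ↦ ⟨fun _ ↦ ∅, ?_, ?_, ?_⟩⟩ <;> simp
  | succ m ih =>
    obtain ⟨I, _, _, hI⟩ := ih
    obtain ⟨ι, _, hHJ⟩ := Line.exists_mono_in_high_dimension (Finset (Option I)) κ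
    classical
    refine ⟨ι × Option I, inferInstance, inferInstance, fun c ↦ ?_⟩
    obtain ⟨l, hl⟩ := hHJ fun w ↦ c (fiberSet w)
    obtain ⟨E, hE⟩ := hI fun T ↦ c (l.varCoords ×ˢ T.map .some)
    exact ⟨_, hE.extend hl⟩

end Combinatorics

open Combinatorics

theorem FSfin.sum_comp_mem {G ι : Type*} [AddCommMonoid G] {r : ℕ} (x : Fin r → G)
    (e : ι ↪ Fin r) {S : Finset ι} (hS : S.Nonempty) : ∑ i ∈ S, x (e i) ∈ FSfin x :=
  ⟨S.map e, hS.map, sum_map _ _ _⟩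

theorem IsIPrStar.exists_sum_mem {G ι : Type*} [AddCommMonoid G] {r : ℕ} {A : Set G}
    (hA : IsIPrStar r A) (y : ι → G) {T : Finset ι} (hT : r ≤ #T) :
    ∃ β ⊆ T, β.Nonempty ∧ ∑ j ∈ β, y j ∈ A := by
  let e : Fin r ↪ ι :=
    (Fin.castLEEmb hT).trans (T.equivFin.symm.toEmbedding.trans (Function.Embedding.subtype _))
  obtain ⟨g, hgA, α, hα, rfl⟩ := hA _ ⟨y ∘ e, subset_rfl⟩
  refine ⟨α.map e, ?_, hα.map, by rwa [sum_map]⟩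
  intro j hj
  obtain ⟨i, -, rfl⟩ := mem_map.1 hj
  exact (T.equivFin.symm _).2

theorem exists_sum_mem_inter_of_isIPrStar {G : Type*} [AddCommMonoid G] {r s : ℕ} {A B : Set G}
    (hA : IsIPrStar r A) (hB : IsIPrStar s B) (y : ℕ → G)
    (hy : ∀ β ⊆ range (r + s), ∀ hne : β.Nonempty, ∑ j ∈ β, y j ∈ A ↔ y (β.max' hne) ∈ A) :
    ∃ β ⊆ range (r + s), β.Nonempty ∧ ∑ j ∈ β, y j ∈ A ∩ B := by
  classical
  have hcard := card_filter_add_card_filter_not (s := range (r + s)) (y · ∈ A)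
  rw [card_range] at hcard
  by_cases hT : s ≤ #{j ∈ range (r + s) | y j ∈ A}
  · obtain ⟨β, hβT, hne, hβB⟩ := hB.exists_sum_mem y hT
    have hβ : β ⊆ range (r + s) := hβT.trans (filter_subset _ _)
    exact ⟨β, hβ, hne, (hy β hβ hne).2 (mem_filter.1 (hβT (β.max'_mem hne))).2, hβB⟩
  · obtain ⟨β, hβT, hne, hβA⟩ :=
      hA.exists_sum_mem y (T := {j ∈ range (r + s) | y j ∉ A}) (by omega)
    exact absurd ((hy β (hβT.trans (filter_subset _ _)) hne).1 hβA)
      (mem_filter.1 (hβT (β.max'_mem hne))).2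

/-- For any `r, s` there is `q` such that, in any abelian group, the intersection of an
IP*_r set and an IP*_s set is IP*_q. -/
theorem iprstar_inter_ipsstar (r s : ℕ) :
    ∃ q : ℕ, ∀ (G : Type*) [AddCommGroup G] (A B : Set G),
      IsIPrStar r A → IsIPrStar s B → IsIPrStar q (A ∩ B) := by
  obtain ⟨I, _, _, hI⟩ := exists_isTopDetermined Prop (r + s)
  refine ⟨Fintype.card I, fun G _ A B hA hB C ⟨x, hxC⟩ ↦ ?_⟩
  let e : I ↪ Fin (Fintype.card I) := (Fintype.equivFin I).toEmbedding
  obtain ⟨D, hD⟩ := hI fun S ↦ ∑ i ∈ S, x (e i) ∈ A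
  have hsum {β : Finset ℕ} (hβ : β ⊆ range (r + s)) :
      ∑ j ∈ β, ∑ i ∈ D j, x (e i) = ∑ i ∈ β.biUnion D, x (e i) :=
    (sum_biUnion (hD.pairwiseDisjoint.subset (Finset.coe_subset.2 hβ))).symm
  obtain ⟨β, hβ, hne, hmem⟩ := exists_sum_mem_inter_of_isIPrStar hA hB (fun j ↦ ∑ i ∈ D j, x (e i))
    fun β hβ hne ↦ by rw [hsum hβ]; exact .of_eq (hD.color_biUnion hβ hne)
  rw [hsum hβ] at hmem
  obtain ⟨j, hj⟩ := hne
  exact ⟨_, hmem, hxC (FSfin.sum_comp_mem x e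
    (biUnion_nonempty.2 ⟨j, hj, hD.nonempty j (mem_range.1 (hβ hj))⟩))⟩
end

section
/- For any d, t ∈ ℕ there exists r ∈ ℕ such that for every coloring c : (𝒫{1,…,r})^d → {1,…,t} there exist sets γ, α_1, …, α_d ⊆ {1,…,r} with γ nonempty and γ ∩ α_i = ∅ for each 1 ≤ i ≤ d, such that c is constant on the set { (α_1 ∪ η_1, …, α_d ∪ η_d) : (η_1,…,η_d) ∈ {∅, γ}^d }. -/
/-!
A point `f` of the cube `Fin r → (Fin d → Bool)` encodes the `d`-tuple of sets `{j | f j i}`.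
Hales–Jewett over the alphabet `Fin d → Bool` yields a monochromatic combinatorial line
(a `Subspace Unit`). Take `γ` to be its set of active coordinates and `αᵢ` the set of fixed
coordinates whose letter has `i`-th bit `true`; the point of the line at the letter `a` then
encodes the tuple `(αᵢ ∪ (if a i then γ else ∅))ᵢ`, which runs through all the tuples
`(αᵢ ∪ ηᵢ)ᵢ`.
-/

namespace Combinatorics.Subspace

variable {η α ι κ : Type*} [Fintype ι]

def columnFinset (f : ι → κ → Bool) (k : κ) : Finset ι := {j | f j k}

theorem mem_columnFinset {f : ι → κ → Bool} {k : κ} {j : ι} :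
    j ∈ columnFinset f k ↔ f j k = true := by
  simp [columnFinset]

open Classical in
noncomputable def activeCoords (l : Subspace η α ι) (e : η) : Finset ι :=
  {j | l.idxFun j = .inr e}

theorem mem_activeCoords {l : Subspace η α ι} {e : η} {j : ι} :
    j ∈ l.activeCoords e ↔ l.idxFun j = .inr e := by
  simp [activeCoords]

theorem activeCoords_nonempty (l : Subspace η α ι) (e : η) : (l.activeCoords e).Nonempty :=
  (l.proper e).imp fun _ => mem_activeCoords.2

theorem disjoint_activeCoords_columnFinset {l : Subspace η (κ → Bool) ι} {x : η → κ → Bool}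
    {e : η} {k : κ} (hx : x e k = false) :
    Disjoint (l.activeCoords e) (columnFinset (l x) k) :=
  Finset.disjoint_left.2 fun j hj => by
    simp [mem_columnFinset, apply_inr (mem_activeCoords.1 hj), hx]

theorem columnFinset_apply_unit [DecidableEq ι] (l : Subspace Unit (κ → Bool) ι)
    (x : Unit → κ → Bool) (k : κ) :
    columnFinset (l x) k =
      columnFinset (l fun _ _ => false) k ∪ if x () k then l.activeCoords () else ∅ := by
  ext j
  rcases h : l.idxFun j with a | ⟨⟩ <;>
    by_cases hk : x () k <;> simp [mem_columnFinset, mem_activeCoords, apply_def, h, hk]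

end Combinatorics.Subspace

open Combinatorics Subspace in
/-- **Corollary of the Hales–Jewett theorem.** For any `d, t` there is `r` such that any
`t`-coloring of `(𝒫{1,…,r})^d` admits sets `γ, α₁, …, α_d ⊆ {1,…,r}` with `γ` nonempty and
disjoint from each `αᵢ`, such that all tuples `(α₁ ∪ η₁, …, α_d ∪ η_d)` with each
`ηᵢ ∈ {∅, γ}` get the same color. -/
theorem hales_jewett_powerset (d t : ℕ) :
    ∃ r : ℕ, ∀ c : (Fin d → Finset (Fin r)) → Fin t,
      ∃ (γ : Finset (Fin r)) (α : Fin d → Finset (Fin r)),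
        γ.Nonempty ∧ (∀ i, Disjoint γ (α i)) ∧
        ∃ col : Fin t, ∀ η : Fin d → Finset (Fin r),
          (∀ i, η i = ∅ ∨ η i = γ) → c (fun i => α i ∪ η i) = col := by
  obtain ⟨r, hr⟩ := exists_mono_in_high_dimension_fin (Fin d → Bool) (Fin t) Unit
  refine ⟨r, fun c => ?_⟩
  obtain ⟨l, col, hcol⟩ := hr fun f => c (columnFinset f)
  refine ⟨l.activeCoords (), columnFinset (l fun _ _ => false), l.activeCoords_nonempty (),
    fun _ => disjoint_activeCoords_columnFinset rfl, col, fun η hη => ?_⟩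
  have hline : (fun i => columnFinset (l fun _ _ => false) i ∪ η i) =
      columnFinset (l fun _ i => decide (η i = l.activeCoords ())) := by
    funext i
    rw [columnFinset_apply_unit _ (fun _ i => decide (η i = l.activeCoords ()))]
    rcases hη i with h | h
    · simp [h, (l.activeCoords_nonempty ()).ne_empty.symm]
    · simp [h]
  rw [hline]
  exact hcol _
end

section
/- Let R be a commutative ring, let (X,d) be a compact metric space, and let T be an action of the additive group of R on X by isometries (so each T^a : X → X is an isometry and T^{a+b} = T^a ∘ T^b). Then for any monomial mapping φ : R^n → R, any x ∈ X, and any ε > 0, there exists r ∈ ℕ such that the set {u ∈ R^n : d(T^{φ(u)} x, x) < ε} is IP*_r in the additive group R^n. -/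
open Set

/-- A monomial mapping `R^n → R`: `u ↦ a · u₁^{d₁} ⋯ u_n^{d_n}` with the `dᵢ` not all zero. -/
def IsMonomialMap {R : Type*} [CommRing R] {n : ℕ} (ψ : (Fin n → R) → R) : Prop :=
  ∃ (a : R) (d : Fin n → ℕ), (∃ i, d i ≠ 0) ∧ ∀ u, ψ u = a * ∏ i, (u i) ^ (d i)

/-!
Colour `a ∈ R` by the ball of a finite `ε / 2 ^ m`-net of `X` containing `T^a x`, where `m`
exceeds the degree of `φ`. Given `y₁, …, y_r`, the ordered finite unions theorem (a consequence
of the multidimensional Hales–Jewett theorem) yields disjoint nonempty blocks `D₀, …, D_{m-1}`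
of indices such that, writing `u_j = ∑_{i ∈ D_j} y_i`, the colour of `φ (u_j + ∑_{k ∈ S} u_k)`
for `S ⊆ {0, …, j - 1}` is that of `φ u_j`. As `φ` has degree `< m`, its `m`-th finite
difference `∑_{S ⊆ {0, …, m-1}} (-1)^|S| φ (∑_{j ∈ S} u_j)` vanishes; grouping the terms by
`max S` writes `φ u₀` as a signed sum of fewer than `2 ^ m` differences of equally coloured
values. Isometry turns `a ↦ d(T^a x, x)` into a group seminorm, so `d(T^{φ u₀} x, x) < ε`,
and `u₀ ∈ FS(y)`.
-/

open Finset Function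

theorem exists_color_union_biUnion_eq_color (κ J : Type*) [Finite κ] [Finite J] :
    ∃ N : ℕ, ∀ χ : Finset (Fin N) → κ, ∃ (γ : Finset (Fin N)) (β : J → Finset (Fin N)),
      (∀ j, (β j).Nonempty) ∧ Pairwise (Disjoint on β) ∧ (∀ j, Disjoint γ (β j)) ∧
      ∀ S : Finset J, χ (γ ∪ S.biUnion β) = χ γ := by
  classical
  obtain ⟨N, hN⟩ := Combinatorics.Subspace.exists_mono_in_high_dimension_fin Bool κ J
  refine ⟨N, fun χ => ?_⟩
  -- a word `w : Fin N → Bool` is read as its support; `γ` collects the coordinates fixed to `true`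
  obtain ⟨l, c, hc⟩ := hN fun w => χ {i | w i}
  set γ : Finset (Fin N) := {i | l.idxFun i = .inl true}
  set β : J → Finset (Fin N) := fun j => {i | l.idxFun i = .inr j}
  have hsupp : ∀ S : Finset J, ({i | l (· ∈ S) i} : Finset (Fin N)) = γ ∪ S.biUnion β := by
    intro S
    ext i
    simp only [γ, β, mem_filter, Finset.mem_univ, true_and]
    rw [Combinatorics.Subspace.apply_def]
    cases h : l.idxFun i <;> simp [h]
  refine ⟨γ, β, fun j => ?_, fun j j' hjj' => ?_, fun j => ?_, fun S => ?_⟩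
  · obtain ⟨i, hi⟩ := l.proper j
    exact ⟨i, by simp [β, hi]⟩
  · simp only [Function.onFun, Finset.disjoint_left, β, mem_filter, Finset.mem_univ, true_and]
    intro i hi hi'
    exact hjj' (Sum.inr_injective (hi.symm.trans hi'))
  · simp only [Finset.disjoint_left, γ, β, mem_filter, Finset.mem_univ, true_and]
    intro i hi hi'
    simp [hi] at hi'
  · have hS := hc fun j => j ∈ S
    have h0 := hc fun j => j ∈ (∅ : Finset J)
    beta_reduce at hS h0
    rw [hsupp] at hS h0
    rw [Finset.biUnion_empty, Finset.union_empty] at h0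
    rw [hS, h0]

theorem Finset.disjoint_biUnion_of_pairwise_disjoint {ι α : Type*} [DecidableEq α]
    {β : ι → Finset α} (hβ : Pairwise (Disjoint on β)) {s t : Finset ι} (hst : Disjoint s t) :
    Disjoint (s.biUnion β) (t.biUnion β) := by
  simp only [Finset.disjoint_biUnion_left, Finset.disjoint_biUnion_right]
  exact fun i hi j hj => hβ (ne_of_mem_of_not_mem hj (Finset.disjoint_right.1 hst hi))

theorem exists_blocks_color_biUnion_insert_eq (κ : Type*) [Finite κ] (m : ℕ) :
    ∃ N : ℕ, ∀ χ : Finset (Fin N) → κ, ∃ D : ℕ → Finset (Fin N),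
      (∀ j < m, (D j).Nonempty) ∧ (Set.Iio m).PairwiseDisjoint D ∧
      ∀ j < m, ∀ S ⊆ range j, χ ((insert j S).biUnion D) = χ (D j) := by
  classical
  induction m with
  | zero => exact ⟨0, fun _ => ⟨fun _ => ∅, by simp, by simp, by simp⟩⟩
  | succ m ih =>
    obtain ⟨N₀, hN₀⟩ := ih
    obtain ⟨N, hN⟩ := exists_color_union_biUnion_eq_color κ (Option (Fin N₀))
    refine ⟨N, fun χ => ?_⟩
    obtain ⟨γ, β, hβne, hβdisj, hγβ, hχ⟩ := hN χ
    set lift : Finset (Fin N₀) → Finset (Fin N) := fun s => s.biUnion (β ∘ some)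
    obtain ⟨D₀, hD₀ne, hD₀disj, hD₀χ⟩ := hN₀ (χ ∘ lift)
    -- the new block goes last: every union containing it has colour `χ γ`
    set D : ℕ → Finset (Fin N) := fun j => if j = m then γ ∪ β none else lift (D₀ j)
    have hD : ∀ j < m, D j = lift (D₀ j) := fun j hj => if_neg hj.ne
    have hDm : D m = γ ∪ β none := if_pos rfl
    have hlift : ∀ S ⊆ range m, S.biUnion D = lift (S.biUnion D₀) := fun S hS => by
      rw [show lift (S.biUnion D₀) = _ from Finset.biUnion_biUnion _ _ _]
      exact biUnion_congr rfl fun j hj => hD j (Finset.mem_range.1 (hS hj))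
    have hβsome : Pairwise (Disjoint on (β ∘ some)) :=
      fun i j hij => hβdisj (Option.some_injective _ |>.ne hij)
    have htop : ∀ s, Disjoint (γ ∪ β none) (lift s) := fun s => by
      simp only [lift, Finset.disjoint_union_left, Finset.disjoint_biUnion_right, comp_apply]
      exact fun g _ => ⟨hγβ _, hβdisj (Option.some_ne_none g).symm⟩
    refine ⟨D, fun j hj => ?_, fun i hi j hj hij => ?_, fun j hj S hS => ?_⟩
    · rcases Nat.lt_succ_iff_lt_or_eq.1 hj with hj | rfl
      · rw [hD j hj]
        exact (hD₀ne j hj).biUnion fun g _ => hβne (some g)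
      · simpa [D] using (hβne none).mono subset_union_right
    · simp only [Set.mem_Iio, Nat.lt_succ_iff_lt_or_eq] at hi hj
      rcases hi with hi | rfl <;> rcases hj with hj | rfl
      · simp only [Function.onFun, hD i hi, hD j hj]
        exact disjoint_biUnion_of_pairwise_disjoint hβsome (hD₀disj hi hj hij)
      · simpa [Function.onFun, hD i hi, hDm] using (htop (D₀ i)).symm
      · simpa [Function.onFun, hD j hj, hDm] using htop (D₀ j)
      · exact absurd rfl hij
    · rcases Nat.lt_succ_iff_lt_or_eq.1 hj with hj | rfl
      · have hins : insert j S ⊆ range m :=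
          insert_subset (Finset.mem_range.2 hj) (hS.trans (range_subset_range.2 hj.le))
        rw [hlift _ hins, hD j hj]
        exact hD₀χ j hj S hS
      · have hunion : β none ∪ lift (S.biUnion D₀) =
            (insert none ((S.biUnion D₀).image some)).biUnion β := by
          rw [Finset.biUnion_insert, Finset.image_biUnion]
          rfl
        rw [Finset.biUnion_insert, hlift S hS, hDm, Finset.union_assoc, hunion, hχ, ← hχ {none},
          Finset.singleton_biUnion]

theorem Finset.sum_powerset_neg_one_pow_card_mul_eq_zero {ι R : Type*} [DecidableEq ι] [Ring R]
    {s : Finset ι} {j : ι} (hj : j ∈ s) (f : Finset ι → R) (hf : ∀ S, f (insert j S) = f S) :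
    ∑ S ∈ s.powerset, (-1) ^ #S * f S = 0 := by
  rw [← insert_erase hj, sum_powerset_insert (notMem_erase j s), ← sum_add_distrib]
  refine sum_eq_zero fun S hS => ?_
  have hjS : j ∉ S := fun h => notMem_erase j s (mem_powerset.1 hS h)
  rw [card_insert_of_notMem hjS, hf, pow_succ]
  noncomm_ring

theorem Finset.sum_powerset_neg_one_pow_card_mul_prod_sum_eq_zero {ι P R : Type*}
    [DecidableEq ι] [Fintype P] [CommRing R] (s : Finset ι) (w : P → ι → R)
    (hs : Fintype.card P < #s) :
    ∑ S ∈ s.powerset, (-1) ^ #S * ∏ p, ∑ j ∈ S, w p j = 0 := by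
  classical
  have expand : ∀ S ∈ s.powerset, ∏ p, ∑ j ∈ S, w p j =
      ∑ g ∈ Fintype.piFinset fun _ => s, ∏ p, if g p ∈ S then w p (g p) else 0 := by
    intro S hS
    rw [sum_prod_piFinset s fun p j => if j ∈ S then w p j else 0]
    simp_rw [sum_ite_mem, inter_eq_right.2 (mem_powerset.1 hS)]
  rw [sum_congr rfl fun S hS => by rw [expand S hS, mul_sum], sum_comm]
  refine sum_eq_zero fun g _ => ?_
  obtain ⟨j, hj, hjg⟩ := exists_mem_notMem_of_card_lt_card
    ((card_image_le.trans_eq (card_univ)).trans_lt hs : #(univ.image g) < #s)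
  refine sum_powerset_neg_one_pow_card_mul_eq_zero hj _ fun S => ?_
  have : ∀ p, g p ≠ j := fun p h => hjg (h ▸ mem_image_of_mem g (Finset.mem_univ p))
  simp [this]

theorem Finset.sum_powerset_neg_one_pow_card_mul_prod_sum_pow_eq_zero {ι κ R : Type*}
    [DecidableEq ι] [Fintype κ] [CommRing R] (s : Finset ι) (u : ι → κ → R) (d : κ → ℕ)
    (hs : ∑ i, d i < #s) :
    ∑ S ∈ s.powerset, (-1) ^ #S * ∏ i, (∑ j ∈ S, u j i) ^ d i = 0 := by
  have hprod : ∀ S : Finset ι, ∏ i, (∑ j ∈ S, u j i) ^ d i =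
      ∏ p : Σ i, Fin (d i), ∑ j ∈ S, u j p.1 := by
    intro S
    simp [Fintype.prod_sigma]
  simp_rw [hprod]
  exact sum_powerset_neg_one_pow_card_mul_prod_sum_eq_zero s _ (by simpa using hs)

theorem IsMonomialMap.map_zero {R : Type*} [CommRing R] {n : ℕ} {φ : (Fin n → R) → R}
    (hφ : IsMonomialMap φ) : φ 0 = 0 := by
  obtain ⟨a, d, ⟨i, hi⟩, hφ⟩ := hφ
  rw [hφ, Finset.prod_eq_zero (Finset.mem_univ i) (by simp [zero_pow hi]), mul_zero]

theorem IsMonomialMap.exists_sum_powerset_range_zsmul_eq_zero {R : Type*} [CommRing R] {n : ℕ}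
    {φ : (Fin n → R) → R} (hφ : IsMonomialMap φ) :
    ∃ m, 0 < m ∧ ∀ u : ℕ → Fin n → R,
      ∑ T ∈ (range m).powerset, (-1 : ℤ) ^ #T • φ (∑ j ∈ T, u j) = 0 := by
  obtain ⟨a, d, -, hφ⟩ := hφ
  refine ⟨∑ i, d i + 1, Nat.succ_pos _, fun u => ?_⟩
  have h := sum_powerset_neg_one_pow_card_mul_prod_sum_pow_eq_zero (range (∑ i, d i + 1)) u d
    (by simp)
  simp only [hφ, Finset.sum_apply, zsmul_eq_mul, Int.cast_pow, Int.cast_neg, Int.cast_one]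
  rw [← mul_zero a, ← h, mul_sum]
  exact sum_congr rfl fun _ _ => by ring

theorem Finset.sum_powerset_range_eq_add_sum_insert {M : Type*} [AddCommMonoid M]
    (f : Finset ℕ → M) (m : ℕ) :
    ∑ T ∈ (range m).powerset, f T =
      f ∅ + ∑ j ∈ range m, ∑ S ∈ (range j).powerset, f (insert j S) := by
  induction m with
  | zero => simp
  | succ m ih =>
    rw [range_add_one, sum_powerset_insert notMem_range_self, ih, sum_insert notMem_range_self,
      add_assoc, add_comm (∑ S ∈ _, f (insert m S))]

namespace AddGroupSeminorm

variable {H : Type*} [AddCommGroup H]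

theorem apply_sum_le {ι : Type*} (p : AddGroupSeminorm H) (s : Finset ι) (f : ι → H) :
    p (∑ i ∈ s, f i) ≤ ∑ i ∈ s, p (f i) :=
  le_sum_of_subadditive p (map_zero p).le (map_add_le_add p) s f

theorem apply_neg_one_pow_zsmul (p : AddGroupSeminorm H) (k : ℕ) (a : H) :
    p ((-1 : ℤ) ^ k • a) = p a := by
  rcases neg_one_pow_eq_or ℤ k with h | h <;> simp [h]

theorem apply_singleton_zero_lt_of_sum_powerset_zsmul_eq_zero (p : AddGroupSeminorm H)
    {m : ℕ} (hm : 0 < m) (v : Finset ℕ → H) {δ : ℝ}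
    (hsum : ∑ T ∈ (range m).powerset, (-1 : ℤ) ^ #T • v T = 0) (hv : v ∅ = 0)
    (hclose : ∀ j < m, ∀ S ⊆ range j, p (v (insert j S) - v {j}) < δ) :
    p (v {0}) < 2 ^ m * δ := by
  have hδ : 0 < δ := by simpa using hclose 0 hm ∅ (empty_subset _)
  set e : ℕ → Finset ℕ → H := fun j S => (-1 : ℤ) ^ #S • (v (insert j S) - v {j})
  have hsign : ∀ j, ∑ S ∈ (range j).powerset, (-1 : ℤ) ^ #S = if j = 0 then 1 else 0 := by
    intro j
    simp [sum_powerset_neg_one_pow_card]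
  have hv0 : v {0} = -∑ j ∈ range m, ∑ S ∈ (range j).powerset, e j S := by
    rw [sum_powerset_range_eq_add_sum_insert, hv, smul_zero, zero_add] at hsum
    have hins : ∀ j, ∀ S ∈ (range j).powerset,
        (-1 : ℤ) ^ #(insert j S) • v (insert j S) = -e j S - (-1 : ℤ) ^ #S • v {j} := by
      intro j S hS
      rw [card_insert_of_notMem fun h => notMem_range_self (mem_powerset.1 hS h), pow_succ]
      simp only [e, smul_sub, mul_neg_one, neg_smul]
      abel
    simp_rw [sum_congr rfl (hins _), sum_sub_distrib, ← sum_smul, hsign, ite_smul, one_smul,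
      zero_smul, sum_ite_eq', Finset.mem_range, hm, if_true, sum_neg_distrib] at hsum
    exact (sub_eq_zero.1 hsum).symm
  have hcount : ∑ j ∈ range m, ∑ S ∈ (range j).powerset, δ = 2 ^ m * δ - δ := by
    have := sum_powerset_range_eq_add_sum_insert (fun _ => δ) m
    simp only [sum_const, card_powerset, card_range, nsmul_eq_mul, Nat.cast_pow,
      Nat.cast_ofNat] at this ⊢
    linarith
  calc p (v {0}) = p (∑ j ∈ range m, ∑ S ∈ (range j).powerset, e j S) := by
        rw [hv0, map_neg_eq_map]
    _ ≤ ∑ j ∈ range m, ∑ S ∈ (range j).powerset, p (e j S) :=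
      (apply_sum_le p _ _).trans (sum_le_sum fun j _ => apply_sum_le p _ _)
    _ ≤ ∑ j ∈ range m, ∑ S ∈ (range j).powerset, δ := by
      gcongr with j hj S hS
      rw [apply_neg_one_pow_zsmul]
      exact (hclose j (Finset.mem_range.1 hj) S (mem_powerset.1 hS)).le
    _ < 2 ^ m * δ := by linarith

end AddGroupSeminorm


theorem exists_isIPrStar_seminorm_lt {G H κ : Type*} [AddCommMonoid G] [AddCommGroup H]
    [Finite κ] (p : AddGroupSeminorm H) (c : H → κ) {δ : ℝ}
    (hc : ∀ a b, c a = c b → p (a - b) < δ) {φ : G → H} (hφ0 : φ 0 = 0) {m : ℕ} (hm : 0 < m)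
    (hφ : ∀ u : ℕ → G, ∑ T ∈ (range m).powerset, (-1 : ℤ) ^ #T • φ (∑ j ∈ T, u j) = 0) :
    ∃ r, IsIPrStar r {g | p (φ g) < 2 ^ m * δ} := by
  obtain ⟨r, hr⟩ := exists_blocks_color_biUnion_insert_eq κ m
  refine ⟨r, fun B ⟨y, hyB⟩ => ?_⟩
  obtain ⟨D, hDne, hDdisj, hDχ⟩ := hr fun α => c (φ (∑ i ∈ α, y i))
  set u : ℕ → G := fun j => ∑ i ∈ D j, y i
  have hu : ∀ T ⊆ range m, ∑ j ∈ T, u j = ∑ i ∈ T.biUnion D, y i := fun T hT =>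
    (sum_biUnion (hDdisj.subset fun j hj => by simpa using hT hj)).symm
  have hclose : ∀ j < m, ∀ S ⊆ range j,
      p (φ (∑ k ∈ insert j S, u k) - φ (∑ k ∈ {j}, u k)) < δ := by
    intro j hj S hS
    refine hc _ _ ?_
    have hins : insert j S ⊆ range m :=
      insert_subset (Finset.mem_range.2 hj) (hS.trans (range_subset_range.2 hj.le))
    rw [hu _ hins, hDχ j hj S hS, sum_singleton]
  have hsmall : p (φ (u 0)) < 2 ^ m * δ := by
    simpa using AddGroupSeminorm.apply_singleton_zero_lt_of_sum_powerset_zsmul_eq_zero p hm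
      (fun T => φ (∑ j ∈ T, u j)) (hφ u) (by simp [hφ0]) hclose
  exact ⟨u 0, hsmall, hyB ⟨D 0, hDne 0 hm, rfl⟩⟩

theorem apply_apply_of_add_eq_zero {A X : Type*} [AddGroup A] {T : A → X → X} (hT0 : T 0 = id)
    (hTadd : ∀ a b, T (a + b) = T a ∘ T b) {a b : A} (hab : a + b = 0) (y : X) :
    T a (T b y) = y := by
  rw [← Function.comp_apply (f := T a), ← hTadd, hab, hT0, id]

section IsometricAction

variable {A X : Type*} [AddGroup A] [PseudoMetricSpace X]

def displacementSeminorm (T : A → X → X) (hT0 : T 0 = id)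
    (hTadd : ∀ a b, T (a + b) = T a ∘ T b) (hTiso : ∀ a, Isometry (T a)) (x : X) :
    AddGroupSeminorm A where
  toFun a := dist (T a x) x
  map_zero' := by simp [hT0]
  add_le' a b := by
    rw [hTadd, Function.comp_apply, add_comm (dist (T a x) x)]
    calc dist (T a (T b x)) x ≤ dist (T a (T b x)) (T a x) + dist (T a x) x := dist_triangle _ _ _
      _ = dist (T b x) x + dist (T a x) x := by rw [(hTiso a).dist_eq]
  neg' a := by
    rw [← (hTiso a).dist_eq, apply_apply_of_add_eq_zero hT0 hTadd (add_neg_cancel a), dist_comm]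

theorem dist_eq_displacementSeminorm {T : A → X → X} (hT0 : T 0 = id)
    (hTadd : ∀ a b, T (a + b) = T a ∘ T b) (hTiso : ∀ a, Isometry (T a)) (x : X) (a b : A) :
    dist (T a x) (T b x) = displacementSeminorm T hT0 hTadd hTiso x (-b + a) := by
  change _ = dist (T (-b + a) x) x
  rw [hTadd, Function.comp_apply, ← (hTiso (-b)).dist_eq (T a x) (T b x),
    apply_apply_of_add_eq_zero hT0 hTadd (neg_add_cancel b)]

end IsometricAction

theorem exists_finite_coloring_dist_lt (X : Type*) [PseudoMetricSpace X] [CompactSpace X]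
    {δ : ℝ} (hδ : 0 < δ) :
    ∃ (t : Set X) (_ : t.Finite) (c : X → t), ∀ y z, c y = c z → dist y z < δ := by
  obtain ⟨t, -, ht, hcover⟩ := finite_cover_balls_of_compact (isCompact_univ (X := X)) (half_pos hδ)
  have hmem : ∀ y : X, ∃ z : t, dist y z < δ / 2 := fun y => by
    simpa using hcover (Set.mem_univ y)
  choose c hc using hmem
  refine ⟨t, ht, c, fun y z hyz => ?_⟩
  calc dist y z ≤ dist y (c y) + dist z (c z) := by rw [hyz]; exact dist_triangle_right _ _ _
    _ < δ / 2 + δ / 2 := add_lt_add (hc y) (hc z)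
    _ = δ := add_halves δ


/-- **Topological recurrence.** For an action `T` of the additive group of a commutative
ring `R` on a compact metric space by isometries, a monomial mapping `φ : R^n → R`, a point
`x` and `ε > 0`, the set of returns `{u : d(T^{φ(u)} x, x) < ε}` is IP*_r for some `r`. -/
theorem monomial_topological_recurrence_iprstar
    {R : Type*} [CommRing R] {X : Type*} [MetricSpace X] [CompactSpace X]
    (T : R → X → X) (hT0 : T 0 = id)
    (hTadd : ∀ a b : R, T (a + b) = T a ∘ T b)
    (hTiso : ∀ a : R, Isometry (T a))
    {n : ℕ} (φ : (Fin n → R) → R) (hφ : IsMonomialMap φ)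
    (x : X) (ε : ℝ) (hε : 0 < ε) :
    ∃ r : ℕ, IsIPrStar r {u : Fin n → R | dist (T (φ u) x) x < ε} := by
  obtain ⟨m, hm, hφm⟩ := hφ.exists_sum_powerset_range_zsmul_eq_zero
  obtain ⟨t, ht, c, hc⟩ := exists_finite_coloring_dist_lt X (by positivity : 0 < ε / 2 ^ m)
  have : Finite t := ht.to_subtype
  set p := displacementSeminorm T hT0 hTadd hTiso x
  have hcp : ∀ a b, c (T a x) = c (T b x) → p (a - b) < ε / 2 ^ m := fun a b hab => by
    simpa [p, dist_eq_displacementSeminorm hT0 hTadd hTiso, neg_add_eq_sub] using hc _ _ hab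
  obtain ⟨r, hr⟩ := exists_isIPrStar_seminorm_lt p _ hcp hφ.map_zero hm hφm
  rw [mul_div_cancel₀ _ (by positivity)] at hr
  exact ⟨r, hr⟩
end

section
/- Let R be a countable commutative ring and let T be the collection of ultrafilters 𝔭 on R such that every member of 𝔭 contains an additive IP_r set for every r ∈ ℕ. Then T is closed under multiplication by arbitrary ultrafilters on both sides: for every 𝔭 ∈ T and every ultrafilter 𝔮 on R, both 𝔭 ⊙ 𝔮 ∈ T and 𝔮 ⊙ 𝔭 ∈ T. -/
open Set

/-- The convolution `𝔭 ⊙ 𝔮` of ultrafilters on a commutative ring: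
`A ∈ 𝔭 ⊙ 𝔮 ↔ {u : R | {x : R | x * u ∈ A} ∈ 𝔭} ∈ 𝔮`. -/
noncomputable def mulConv {R : Type*} [CommRing R] (p q : Ultrafilter R) : Ultrafilter R :=
  q.bind (fun u => p.map (fun x => x * u))

/-- The collection of ultrafilters all of whose members contain additive IP_r sets for all
`r` is a two-sided ideal under ultrafilter multiplication. -/
theorem ipr_rich_ultrafilters_two_sided_ideal
    {R : Type*} [CommRing R] [Countable R] (p q : Ultrafilter R)
    (hp : ∀ A ∈ p, ∀ r : ℕ, IsIPr r A) :
    (∀ A ∈ mulConv p q, ∀ r : ℕ, IsIPr r A) ∧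
    (∀ A ∈ mulConv q p, ∀ r : ℕ, IsIPr r A) := by
  constructor
  · intro A hA r
    have hU : {u : R | {x : R | x * u ∈ A} ∈ p} ∈ q := hA
    obtain ⟨u, hu⟩ := Filter.nonempty_of_mem (f := (q : Filter R)) hU
    obtain ⟨x, hx⟩ := hp _ hu r
    refine ⟨fun i => x i * u, ?_⟩
    rintro g ⟨α, hα, rfl⟩
    have : (∑ i ∈ α, x i) ∈ FSfin x := ⟨α, hα, rfl⟩
    have := hx this
    simpa [Finset.sum_mul] using this
  · intro A hA r
    have hV : {u : R | {y : R | y * u ∈ A} ∈ q} ∈ p := hA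
    obtain ⟨x, hx⟩ := hp _ hV r
    have hS : (⋂ α : Finset (Fin r), {y : R | α.Nonempty → y * ∑ i ∈ α, x i ∈ A}) ∈ q := by
      refine Filter.iInter_mem.mpr fun α => ?_
      by_cases hα : α.Nonempty
      · have hmem : (∑ i ∈ α, x i) ∈ FSfin x := ⟨α, hα, rfl⟩
        have := hx hmem
        exact Filter.mem_of_superset this fun y hy _ => hy
      · exact Filter.mem_of_superset Filter.univ_mem fun y _ h => absurd h hα
    obtain ⟨y, hy⟩ := Filter.nonempty_of_mem (f := (q : Filter R)) hS
    refine ⟨fun i => x i * y, ?_⟩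
    rintro g ⟨α, hα, rfl⟩
    have hyα : y * ∑ i ∈ α, x i ∈ A := (Set.mem_iInter.mp hy α) hα
    have : (∑ i ∈ α, x i * y) = y * ∑ i ∈ α, x i := by
      rw [← Finset.sum_mul, mul_comm]
    rwa [this]
end
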